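/- Let G_0 = G and let W_1, …, W_r be such that each W_t is a clique of G_{t−1} and G_t = G_{t−1}|W_t. Define F_0 = STAB(G) and F_t = {x ∈ STAB(G) : x_{W_j} = 1 for j = 1,…,t}. Then F_t ⊆ STAB(G_t) for every t ∈ {0,…,r}. -/

import Mathlib

open Finset

variable {V : Type*}

/-- A stable (independent) set of a graph: pairwise non-adjacent vertices. -/
def IsStable (G : SimpleGraph V) (S : Finset V) : Prop :=
  ∀ u ∈ S, ∀ v ∈ S, ¬ G.Adj u v

/-- The characteristic vectors of stable sets of `G`. -/
def stableVecs [DecidableEq V] (G : SimpleGraph V) : Set (V → ℝ) :=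
  {x | ∃ S : Finset V, IsStable G S ∧ x = fun v => if v ∈ S then (1 : ℝ) else 0}

/-- The stable set polytope `STAB(G)`. -/
def STAB [DecidableEq V] (G : SimpleGraph V) : Set (V → ℝ) :=
  convexHull ℝ (stableVecs G)

/-- `x_W = ∑_{v ∈ W} x_v`. -/
def vsum (W : Finset V) (x : V → ℝ) : ℝ := ∑ v ∈ W, x v

/-- The clique projection `G|W`: add every non-edge `uv` with `W ⊆ N(u) ∪ N(v)`. -/
def cliqueProj (G : SimpleGraph V) (W : Finset V) : SimpleGraph V where
  Adj u v := G.Adj u v ∨ (u ≠ v ∧ ¬G.Adj u v ∧ ∀ w ∈ W, G.Adj w u ∨ G.Adj w v)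
  symm := ⟨by
    rintro u v (h | ⟨hne, hna, h⟩)
    · exact Or.inl h.symm
    · exact Or.inr ⟨hne.symm, fun h' => hna h'.symm, fun w hw => (h w hw).symm⟩⟩
  loopless := ⟨by
    rintro u (h | ⟨hne, _, _⟩)
    · exact G.loopless.irrefl u h
    · exact hne rfl⟩

/-- Iterated projected graphs: `G_0 = G`, `G_t = G_{t-1} | W_t`. -/
def projSeq (G : SimpleGraph V) (W : ℕ → Finset V) : ℕ → SimpleGraph V
  | 0 => G
  | t + 1 => cliqueProj (projSeq G W t) (W (t + 1))

/-- `F_t = {x ∈ STAB(G) : x_{W_j} = 1, j = 1, …, t}`. -/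
def Fface [DecidableEq V] (G : SimpleGraph V) (W : ℕ → Finset V) (t : ℕ) : Set (V → ℝ) :=
  {x ∈ STAB G | ∀ j ∈ Finset.Icc 1 t, vsum (W j) x = 1}

/-- `α(G[H], c)`: the maximum `c`-weight of a stable set of `G` contained in `H`. -/
noncomputable def alphaW (G : SimpleGraph V) (H : Finset V) (c : V → ℝ) : ℝ :=
  sSup {r : ℝ | ∃ S : Finset V, S ⊆ H ∧ IsStable G S ∧ r = ∑ v ∈ S, c v}

/-- `α(G[H])`: the maximum cardinality of a stable set of `G` contained in `H`. -/
noncomputable def alphaOn (G : SimpleGraph V) (H : Finset V) : ℕ :=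
  sSup {k : ℕ | ∃ S : Finset V, S ⊆ H ∧ IsStable G S ∧ S.card = k}

/-- The stability number `α(G)`. -/
noncomputable def alphaNum [Fintype V] (G : SimpleGraph V) : ℕ :=
  sSup {k : ℕ | ∃ S : Finset V, IsStable G S ∧ S.card = k}

/-- `cᵀx`. -/
def dotp [Fintype V] (c x : V → ℝ) : ℝ := ∑ v, c v * x v

/-- The affine dimension of a set of points. -/
noncomputable def affDim (s : Set (V → ℝ)) : ℕ := Module.finrank ℝ (vectorSpan ℝ s)

/-- Strong hypertree (with hyperedges of size `k`). -/
inductive IsStrongHypertree [DecidableEq V] (k : ℕ) : Finset V → Finset (Finset V) → Prop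
  | base (V' : Finset V) : IsStrongHypertree k V' {V'}
  | step (V' : Finset V) (E : Finset (Finset V)) (v : V) (Wi : Finset V) :
      v ∈ V' → v ∈ Wi → Wi ∈ E →
      (∃ Wj ∈ E, Wj ≠ Wi ∧ (Wi ∩ Wj).card = k - 1) →
      IsStrongHypertree k (V'.erase v) (E.erase Wi) →
      IsStrongHypertree k V' E

/-- Condition (I): `|W_t| = k` and the subgraph of `G_{t-1}` induced by `W_1 ∪ ⋯ ∪ W_t`
is `k`-partite with stable vertex classes `V_t^1, …, V_t^k`. -/
def CondI [DecidableEq V] (G : SimpleGraph V) (W : ℕ → Finset V)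
    (Vc : ℕ → ℕ → Finset V) (k t : ℕ) : Prop :=
  (W t).card = k ∧
  (Finset.Icc 1 k).biUnion (Vc t) = (Finset.Icc 1 t).biUnion W ∧
  (∀ i ∈ Finset.Icc 1 k, ∀ j ∈ Finset.Icc 1 k, i ≠ j → Disjoint (Vc t i) (Vc t j)) ∧
  (∀ i ∈ Finset.Icc 1 k, ∀ u ∈ Vc t i, ∀ v ∈ Vc t i, ¬(projSeq G W (t - 1)).Adj u v)

/-- Condition (II): `T_t = (V_t, {W_1, …, W_t})` is a strong hypertree. -/
def CondII [DecidableEq V] (W : ℕ → Finset V) (Vc : ℕ → ℕ → Finset V) (k t : ℕ) : Prop :=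
  IsStrongHypertree k ((Finset.Icc 1 k).biUnion (Vc t)) ((Finset.Icc 1 t).image W)

/-- Condition (III): every `w ∉ V_t` misses some class `V_t^i` in `G_{t-1}`. -/
def CondIII [DecidableEq V] (G : SimpleGraph V) (W : ℕ → Finset V)
    (Vc : ℕ → ℕ → Finset V) (k t : ℕ) : Prop :=
  ∀ w : V, w ∉ (Finset.Icc 1 k).biUnion (Vc t) →
    ∃ i ∈ Finset.Icc 1 k, ∀ u ∈ Vc t i, ¬(projSeq G W (t - 1)).Adj w u

/-- Condition (IV). -/
def CondIV [Fintype V] [DecidableEq V] (G : SimpleGraph V) (W : ℕ → Finset V)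
    (Vc : ℕ → ℕ → Finset V) (k r : ℕ) : Prop :=
  ∀ i ∈ Finset.Icc 1 (k - 1), ∀ t ∈ Finset.Icc 1 r, ∀ v ∈ W t ∩ Vc t i,
    ∀ w ∈ Finset.univ \ (Finset.Icc 1 k).biUnion (Vc r),
      (∃ z ∈ Vc r i, (projSeq G W r).Adj z w) →
      (G.Adj v w ∨ ∃ t' ∈ Finset.Icc 1 r,
        (projSeq G W (t' - 1)).IsClique (W t : Set V) ∧
        W t ≠ W t' ∧ (W t ∩ W t').card = k - 1 ∧
        v ∉ W t' ∧ ∃ v' ∈ W t' ∩ Vc r i, (projSeq G W (t' - 1)).Adj v' w)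

/-- Condition (V): no vertex of `V_t^k` has a neighbor in `V_r^0` in the graph `G_r`. -/
def CondV [Fintype V] [DecidableEq V] (G : SimpleGraph V) (W : ℕ → Finset V)
    (Vc : ℕ → ℕ → Finset V) (k r t : ℕ) : Prop :=
  ∀ v ∈ Vc t k, ∀ w ∈ Finset.univ \ (Finset.Icc 1 k).biUnion (Vc r),
    ¬(projSeq G W r).Adj v w

/-- `STAB(G[H])`, embedded in `ℝ^V` (coordinates outside `H` are zero). -/
def STABon [DecidableEq V] (G : SimpleGraph V) (H : Finset V) : Set (V → ℝ) :=
  convexHull ℝ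
    {x | ∃ S : Finset V, S ⊆ H ∧ IsStable G S ∧ x = fun v => if v ∈ S then (1 : ℝ) else 0}

/-! A point of `STAB(G_{t-1})` with `x_{W_t} = 1` lies on the face of the polytope cut out by this
valid inequality (valid because `W_t` is a clique), so it is a convex combination of stable sets
meeting `W_t`. Such a stable set stays stable in `G_{t-1}|W_t`: a new edge `uv` has every vertex of
`W_t` adjacent to `u` or `v`, in particular the vertex the set shares with `W_t`. -/

section Face

variable {𝕜 E : Type*} [Field 𝕜] [LinearOrder 𝕜] [IsStrictOrderedRing 𝕜]
  [AddCommGroup E] [Module 𝕜 E]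

theorem mem_convexHull_inter_of_apply_eq {s : Set E} {φ : E →ₗ[𝕜] 𝕜} {c : 𝕜}
    (hs : ∀ y ∈ s, φ y ≤ c) {x : E} (hx : x ∈ convexHull 𝕜 s) (hφx : φ x = c) :
    x ∈ convexHull 𝕜 (s ∩ {y | φ y = c}) := by
  set F := convexHull 𝕜 (s ∩ {y | φ y = c})
  have hle : convexHull 𝕜 s ⊆ {y | φ y ≤ c} :=
    convexHull_min hs (convex_halfSpace_le φ.isLinear c)
  suffices hsub : convexHull 𝕜 s ⊆ {y | y ∈ convexHull 𝕜 s ∧ (φ y = c → y ∈ F)} from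
    (hsub hx).2 hφx
  refine convexHull_min (fun y hy => ⟨subset_convexHull 𝕜 s hy,
    fun hφy => subset_convexHull 𝕜 _ ⟨hy, hφy⟩⟩) ?_
  rintro y ⟨hy, hyF⟩ z ⟨hz, hzF⟩ a b ha hb hab
  refine ⟨convex_convexHull 𝕜 s hy hz ha hb hab, fun hφ => ?_⟩
  simp only [map_add, map_smul, smul_eq_mul] at hφ
  have hφy : φ y ≤ c := hle hy
  have hφz : φ z ≤ c := hle hz
  rcases ha.eq_or_lt with rfl | ha'
  · obtain rfl : b = 1 := by simpa using hab
    simpa using hzF (by simpa using hφ)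
  rcases hb.eq_or_lt with rfl | hb'
  · obtain rfl : a = 1 := by simpa using hab
    simpa using hyF (by simpa using hφ)
  have hgap : a * (c - φ y) + b * (c - φ z) = 0 := by linear_combination c * hab - hφ
  have hgap_y : a * (c - φ y) = 0 := by
    linarith [mul_nonneg ha (sub_nonneg.2 hφy), mul_nonneg hb (sub_nonneg.2 hφz)]
  have hgap_z : b * (c - φ z) = 0 := by linarith
  have hφy' : φ y = c := (sub_eq_zero.1 ((mul_eq_zero.1 hgap_y).resolve_left ha'.ne')).symm
  have hφz' : φ z = c := (sub_eq_zero.1 ((mul_eq_zero.1 hgap_z).resolve_left hb'.ne')).symm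
  exact convex_convexHull 𝕜 _ (hyF hφy') (hzF hφz') ha hb hab

end Face

section CliqueProjection

variable [DecidableEq V] {H : SimpleGraph V} {W S : Finset V}

theorem vsum_indicator (W S : Finset V) :
    vsum W (fun v => if v ∈ S then (1 : ℝ) else 0) = #(W ∩ S) := by
  simp [vsum, Finset.sum_ite_mem]

theorem IsStable.card_inter_le_one (hS : IsStable H S) (hW : H.IsClique (W : Set V)) :
    #(W ∩ S) ≤ 1 :=
  Finset.card_le_one.mpr fun a ha b hb => by
    rw [Finset.mem_inter] at ha hb
    by_contra hab
    exact hS a ha.2 b hb.2 (hW ha.1 hb.1 hab)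

theorem IsStable.cliqueProj (hS : IsStable H S) (hWS : (W ∩ S).Nonempty) :
    IsStable (cliqueProj H W) S := by
  obtain ⟨w, hw⟩ := hWS
  rw [Finset.mem_inter] at hw
  rintro u hu v hv (huv | ⟨-, -, hcover⟩)
  · exact hS u hu v hv huv
  · rcases hcover w hw.1 with hwu | hwv
    · exact hS w hw.2 u hu hwu
    · exact hS w hw.2 v hv hwv

theorem mem_STAB_cliqueProj (hW : H.IsClique (W : Set V)) {x : V → ℝ} (hx : x ∈ STAB H)
    (hxW : vsum W x = 1) : x ∈ STAB (cliqueProj H W) := by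
  let φ : (V → ℝ) →ₗ[ℝ] ℝ := ∑ v ∈ W, LinearMap.proj v
  have hφ : ∀ y, φ y = vsum W y := fun y => by simp [φ, vsum]
  have hvalid : ∀ y ∈ stableVecs H, φ y ≤ 1 := by
    rintro _ ⟨T, hT, rfl⟩
    rw [hφ, vsum_indicator]
    exact_mod_cast hT.card_inter_le_one hW
  have hface : stableVecs H ∩ {y | φ y = 1} ⊆ stableVecs (cliqueProj H W) := by
    rintro _ ⟨⟨T, hT, rfl⟩, hT1⟩
    rw [Set.mem_ofPred_eq, hφ, vsum_indicator, Nat.cast_eq_one] at hT1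
    exact ⟨T, hT.cliqueProj (Finset.card_pos.mp (by omega)), rfl⟩
  exact convexHull_mono hface
    (mem_convexHull_inter_of_apply_eq hvalid hx ((hφ x).trans hxW))

theorem Fface_succ (G : SimpleGraph V) (W : ℕ → Finset V) (t : ℕ) :
    Fface G W (t + 1) = Fface G W t ∩ {x | vsum (W (t + 1)) x = 1} := by
  ext x
  simp only [Fface, Set.mem_inter_iff, Set.mem_ofPred_eq, Finset.mem_Icc]
  constructor
  · rintro ⟨hx, hW⟩
    exact ⟨⟨hx, fun j hj => hW j ⟨hj.1, by omega⟩⟩, hW (t + 1) ⟨by omega, le_rfl⟩⟩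
  · rintro ⟨⟨hx, hW⟩, hlast⟩
    refine ⟨hx, fun j hj => ?_⟩
    rcases hj.2.lt_or_eq with hlt | rfl
    · exact hW j ⟨hj.1, by omega⟩
    · exact hlast

end CliqueProjection

theorem stmt6_general {V : Type*} [DecidableEq V] (G : SimpleGraph V)
    (r : ℕ) (W : ℕ → Finset V)
    (hclique : ∀ t ∈ Finset.Icc 1 r, (projSeq G W (t - 1)).IsClique (W t : Set V)) :
    ∀ t ≤ r, Fface G W t ⊆ STAB (projSeq G W t) := by
  intro t
  induction t with
  | zero => exact fun _ x hx => hx.1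
  | succ t ih =>
    intro ht
    have hWt : (projSeq G W t).IsClique (W (t + 1) : Set V) := by
      simpa using hclique (t + 1) (Finset.mem_Icc.mpr ⟨by omega, ht⟩)
    rw [Fface_succ]
    rintro x ⟨hx, hxW⟩
    exact mem_STAB_cliqueProj hWt (ih (by omega) hx) hxW

/-- `F_t ⊆ STAB(G_t)` for every `t ∈ {0,…,r}`. -/
theorem stmt6 {V : Type*} [Fintype V] [DecidableEq V] (G : SimpleGraph V)
    (r : ℕ) (W : ℕ → Finset V)
    (hclique : ∀ t ∈ Finset.Icc 1 r, (projSeq G W (t - 1)).IsClique (W t : Set V)) :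
    ∀ t ≤ r, Fface G W t ⊆ STAB (projSeq G W t) :=
  stmt6_general G r W hclique
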